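/- Let W ∈ ℤ^{m×n}, g convex on W[0,1]^n with L-Lipschitz gradients and sharp with parameters μ > 0, θ ∈ [0,1] at its minimizer v* = Wx* over W[0,1]^n, where x* minimizes g(Wx) over [0,1]^n and has at most m fractional entries. Let z* ∈ {0,1}^n minimize g(Wz) over {0,1}^n. Then ‖Wz* − Wx*‖₁ ≤ μ·(m⁴·(L/4)·‖W‖_∞²)^θ. -/

import Mathlib

/-!
Round `x*` coordinatewise to `⌈x*⌋`. Only the at most `m` fractional coordinates move, each by at
most `1/2`, so `‖W⌈x*⌋ − Wx*‖₁ ≤ m²‖W‖_∞/2`. The fractional coordinates of the minimizer `x*` lie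
in the interior of the cube, so the gradient of `g` at `Wx*` vanishes in the direction
`W(⌈x*⌋ − x*)`. The gradient inequality of convexity, applied at `W⌈x*⌋`, and the Lipschitz bound
on the gradient then give `g(W⌈x*⌋) − g(Wx*) ≤ L‖W⌈x*⌋ − Wx*‖₁² ≤ (L/4)m⁴‖W‖_∞²`. Since `z*` is
an integral minimizer, `g(Wz*) − g(Wx*)` obeys the same bound, and sharpness turns it into the
bound on `‖Wz* − Wx*‖₁`.
-/

open Set Filter Topology Matrix

theorem round_eq_zero_or_one_of_mem_Icc {x : ℝ} (hx : x ∈ Icc 0 1) :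
    round x = 0 ∨ round x = 1 := by
  have h := abs_le.1 (abs_sub_round x)
  have hlo : (-1 : ℝ) < round x := by linarith [hx.1]
  have hhi : (round x : ℝ) < 2 := by linarith [hx.2]
  have : -1 < round x ∧ round x < 2 := ⟨by exact_mod_cast hlo, by exact_mod_cast hhi⟩
  omega

theorem ConvexOn.sub_le_fderiv_apply_sub {E : Type*} [NormedAddCommGroup E] [NormedSpace ℝ E]
    {s : Set E} {f : E → ℝ} (hf : ConvexOn ℝ s f) {x y : E} (hx : x ∈ s) (hy : y ∈ s)
    (hfy : DifferentiableAt ℝ f y) : f y - f x ≤ fderiv ℝ f y (y - x) := by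
  have hline : ConvexOn ℝ (Icc 0 1) (f ∘ (AffineMap.lineMap x y : ℝ → E)) :=
    (hf.comp_affineMap _).subset (fun t ht => hf.1.lineMap_mem hx hy ht) (convex_Icc 0 1)
  have hderiv : HasDerivAt (f ∘ (AffineMap.lineMap x y : ℝ → E)) (fderiv ℝ f y (y - x)) 1 := by
    have hfy' : HasFDerivAt f (fderiv ℝ f y) (AffineMap.lineMap x y (1 : ℝ)) := by
      simpa using hfy.hasFDerivAt
    exact hfy'.comp_hasDerivAt 1 AffineMap.hasDerivAt_lineMap
  simpa [slope_def_field] using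
    hline.slope_le_of_hasDerivAt (left_mem_Icc.2 zero_le_one) (right_mem_Icc.2 zero_le_one)
      zero_lt_one hderiv

theorem IsMinOn.fderiv_apply_eq_zero {E : Type*} [NormedAddCommGroup E] [NormedSpace ℝ E]
    {s : Set E} {f : E → ℝ} {a y : E} (hmin : IsMinOn f s a) (hf : DifferentiableAt ℝ f a)
    (hline : ∀ᶠ t in 𝓝 (0 : ℝ), a + t • y ∈ s) : fderiv ℝ f a y = 0 := by
  have hloc : IsLocalMin (fun t : ℝ => f (a + t • y)) 0 := hline.mono fun t ht => by
    simpa using hmin ht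
  have hl : HasDerivAt (fun t : ℝ => a + t • y) y 0 := by
    simpa using ((hasDerivAt_id (0 : ℝ)).smul_const y).const_add a
  have hf' : HasFDerivAt f (fderiv ℝ f a) (a + (0 : ℝ) • y) := by simpa using hf.hasFDerivAt
  exact hloc.hasDerivAt_eq_zero (hf'.comp_hasDerivAt 0 hl)

variable {κ ι : Type*}

theorem eventually_add_smul_mem_unitCube [Finite ι] {x d : ι → ℝ} (hx : ∀ i, x i ∈ Icc 0 1)
    (hd : ∀ i, d i ≠ 0 → x i ∈ Ioo 0 1) :
    ∀ᶠ t in 𝓝 (0 : ℝ), ∀ i, (x + t • d) i ∈ Icc 0 1 := by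
  refine eventually_all.2 fun i => ?_
  by_cases hdi : d i = 0
  · simp [hdi, hx i]
  · have hcont : Continuous fun t : ℝ => x i + t * d i := by fun_prop
    have := hcont.tendsto 0
    simp only [zero_mul, add_zero] at this
    filter_upwards [this (isOpen_Ioo.mem_nhds (hd i hdi))] with t ht
    exact Ioo_subset_Icc_self ht

theorem ContinuousLinearMap.abs_apply_le_of_abs_apply_single_le [Fintype κ] [DecidableEq κ]
    (φ : (κ → ℝ) →L[ℝ] ℝ) {C : ℝ} (hφ : ∀ j, |φ (Pi.single j 1)| ≤ C) (d : κ → ℝ) :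
    |φ d| ≤ C * ∑ j, |d j| := by
  calc |φ d| = |∑ j, d j * φ (Pi.single j 1)| := by
        conv_lhs => rw [pi_eq_sum_univ' d]
        simp [map_sum]
    _ ≤ ∑ j, |d j| * C := by
        refine (Finset.abs_sum_le_sum_abs _ _).trans (Finset.sum_le_sum fun j _ => ?_)
        rw [abs_mul]
        exact mul_le_mul_of_nonneg_left (hφ j) (abs_nonneg _)
    _ = C * ∑ j, |d j| := by rw [Finset.mul_sum]; simp only [mul_comm]

theorem Matrix.abs_mulVec_apply_le [Fintype ι] {A : Matrix κ ι ℝ} {B δ : ℝ}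
    (hA : ∀ j i, |A j i| ≤ B) {d : ι → ℝ} {s : Finset ι}
    (hds : ∀ i ∉ s, d i = 0) (hδ : ∀ i, |d i| ≤ δ) (j : κ) :
    |(A *ᵥ d) j| ≤ s.card * (B * δ) := by
  have hsupp : ∑ i ∈ s, A j i * d i = (A *ᵥ d) j :=
    Finset.sum_subset (Finset.subset_univ s) fun i _ hi => by simp [hds i hi]
  rw [← hsupp, ← nsmul_eq_mul]
  refine (Finset.abs_sum_le_sum_abs _ _).trans (Finset.sum_le_card_nsmul _ _ _ fun i _ => ?_)
  rw [abs_mul]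
  exact mul_le_mul (hA j i) (hδ i) (abs_nonneg _) ((abs_nonneg _).trans (hA j i))

theorem Matrix.sum_abs_mulVec_le [Fintype κ] [Fintype ι] {A : Matrix κ ι ℝ} {B δ : ℝ}
    (hA : ∀ j i, |A j i| ≤ B) {d : ι → ℝ} {s : Finset ι}
    (hds : ∀ i ∉ s, d i = 0) (hδ : ∀ i, |d i| ≤ δ) :
    ∑ j, |(A *ᵥ d) j| ≤ Fintype.card κ * (s.card * (B * δ)) := by
  have := Finset.sum_le_card_nsmul Finset.univ _ _ fun j _ =>
    Matrix.abs_mulVec_apply_le hA hds hδ j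
  rwa [Finset.card_univ, nsmul_eq_mul] at this

theorem Matrix.abs_intCast_apply_le_sup_natAbs [Fintype κ] [Fintype ι] (W : Matrix κ ι ℤ)
    (j : κ) (i : ι) :
    |(W.map (Int.cast : ℤ → ℝ)) j i| ≤
      ((Finset.univ.sup fun p : κ × ι => (W p.1 p.2).natAbs : ℕ) : ℝ) := by
  rw [Matrix.map_apply, ← Int.cast_abs, Int.abs_eq_natAbs, Int.cast_natCast, Nat.cast_le]
  exact Finset.le_sup (f := fun p : κ × ι => (W p.1 p.2).natAbs) (Finset.mem_univ (j, i))

theorem apply_mulVec_round_sub_le [Fintype κ] [DecidableEq κ] [Fintype ι]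
    {A : Matrix κ ι ℝ} {g : (κ → ℝ) → ℝ} {L B : ℝ}
    (hL : 0 ≤ L) (hconv : ConvexOn ℝ (A.mulVec '' {x | ∀ i, x i ∈ Icc 0 1}) g)
    (hdiff : Differentiable ℝ g)
    (hLip : ∀ u v : κ → ℝ, ∀ j : κ,
      |fderiv ℝ g u (Pi.single j 1) - fderiv ℝ g v (Pi.single j 1)| ≤ L * ∑ i, |u i - v i|)
    (hA : ∀ j i, |A j i| ≤ B) {x : ι → ℝ} (hx : ∀ i, x i ∈ Icc 0 1)
    (hmin : ∀ y : ι → ℝ, (∀ i, y i ∈ Icc 0 1) → g (A *ᵥ x) ≤ g (A *ᵥ y)) :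
    g (A *ᵥ fun i => (round (x i) : ℝ)) - g (A *ᵥ x) ≤
      L * (Fintype.card κ *
        ((Finset.univ.filter fun i => x i ≠ 0 ∧ x i ≠ 1).card * (B * (1 / 2)))) ^ 2 := by
  classical
  set xr : ι → ℝ := fun i => (round (x i) : ℝ)
  set d := xr - x
  have hxr : ∀ i, xr i ∈ Icc 0 1 := fun i => by
    rcases round_eq_zero_or_one_of_mem_Icc (hx i) with h | h <;> simp [xr, h]
  have hd_supp : ∀ i, ¬(x i ≠ 0 ∧ x i ≠ 1) → d i = 0 := fun i hi => by
    rcases not_and_or.1 hi with h | h <;> simp [d, xr, not_not.1 h]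
  have hd_frac : ∀ i, d i ≠ 0 → x i ∈ Ioo 0 1 := fun i hi => by
    have h := not_imp_comm.1 (hd_supp i) hi
    exact ⟨(hx i).1.lt_of_ne' h.1, (hx i).2.lt_of_ne h.2⟩
  have hd_half : ∀ i, |d i| ≤ 1 / 2 := fun i => by
    simpa [d, xr, abs_sub_comm] using abs_sub_round (x i)
  have hAd : A *ᵥ xr - A *ᵥ x = A *ᵥ d := (Matrix.mulVec_sub A xr x).symm
  have hisMin : IsMinOn g (A.mulVec '' {x | ∀ i, x i ∈ Icc 0 1}) (A *ᵥ x) := by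
    rintro _ ⟨y, hy, rfl⟩
    exact hmin y hy
  have hfirst : fderiv ℝ g (A *ᵥ x) (A *ᵥ d) = 0 := by
    refine hisMin.fderiv_apply_eq_zero (hdiff _) ?_
    · filter_upwards [eventually_add_smul_mem_unitCube hx hd_frac] with t ht
      exact ⟨x + t • d, ht, by rw [Matrix.mulVec_add, Matrix.mulVec_smul]⟩
  set S := ∑ j, |(A *ᵥ d) j|
  have hS : S ≤ Fintype.card κ *
      ((Finset.univ.filter fun i => x i ≠ 0 ∧ x i ≠ 1).card * (B * (1 / 2))) :=
    Matrix.sum_abs_mulVec_le hA (fun i hi => hd_supp i (by simpa using hi)) hd_half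
  have hlip : (fderiv ℝ g (A *ᵥ xr) - fderiv ℝ g (A *ᵥ x)) (A *ᵥ d) ≤ L * S * S := by
    refine (le_abs_self _).trans
      (ContinuousLinearMap.abs_apply_le_of_abs_apply_single_le _ (fun j => ?_) _)
    have hS_eq : ∑ i, |(A *ᵥ xr) i - (A *ᵥ x) i| = S := by simp [S, ← hAd]
    exact (hLip _ _ j).trans_eq (by rw [hS_eq])
  calc g (A *ᵥ xr) - g (A *ᵥ x) ≤ fderiv ℝ g (A *ᵥ xr) (A *ᵥ d) := by
        rw [← hAd]
        exact hconv.sub_le_fderiv_apply_sub ⟨x, hx, rfl⟩ ⟨xr, hxr, rfl⟩ (hdiff _)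
    _ = (fderiv ℝ g (A *ᵥ xr) - fderiv ℝ g (A *ᵥ x)) (A *ᵥ d) := by
        rw [_root_.sub_apply, hfirst, sub_zero]
    _ ≤ L * S * S := hlip
    _ ≤ _ := by
        have hS0 : 0 ≤ S := Finset.sum_nonneg fun j _ => abs_nonneg _
        rw [mul_assoc, ← sq]
        gcongr

/-- Sharpness bounds the distance between the images of fractional and integral
minima: ‖Wz* − Wx*‖₁ ≤ μ(m⁴(L/4)‖W‖_∞²)^θ. -/
theorem stmt15 (m n : ℕ) (W : Matrix (Fin m) (Fin n) ℤ) (g : (Fin m → ℝ) → ℝ)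
    (L μ θ : ℝ) (hL : 0 < L) (hμ : 0 < μ) (hθ : θ ∈ Set.Icc (0:ℝ) 1)
    (P : Set (Fin m → ℝ))
    (hP : P = (fun x => (W.map (fun a => (a:ℝ))).mulVec x) '' {x | ∀ i, x i ∈ Set.Icc (0:ℝ) 1})
    (hconv : ConvexOn ℝ P g) (hdiff : Differentiable ℝ g)
    (hLip : ∀ u v : Fin m → ℝ, ∀ j : Fin m,
      |fderiv ℝ g u (Pi.single j 1) - fderiv ℝ g v (Pi.single j 1)| ≤ L * ∑ i, |u i - v i|)
    (xs : Fin n → ℝ) (hxs : ∀ i, xs i ∈ Set.Icc (0:ℝ) 1)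
    (hmin : ∀ y : Fin n → ℝ, (∀ i, y i ∈ Set.Icc (0:ℝ) 1) →
      g ((W.map (fun a => (a:ℝ))).mulVec xs) ≤ g ((W.map (fun a => (a:ℝ))).mulVec y))
    (hfrac : Set.ncard {i | xs i ≠ 0 ∧ xs i ≠ 1} ≤ m)
    (hsharp : ∀ u ∈ P, ∑ i, |u i - ((W.map (fun a => (a:ℝ))).mulVec xs) i| ≤
      μ * (g u - g ((W.map (fun a => (a:ℝ))).mulVec xs)) ^ θ)
    (zs : Fin n → ℝ) (hzs : ∀ i, zs i = 0 ∨ zs i = 1)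
    (hzmin : ∀ y : Fin n → ℝ, (∀ i, y i = 0 ∨ y i = 1) →
      g ((W.map (fun a => (a:ℝ))).mulVec zs) ≤ g ((W.map (fun a => (a:ℝ))).mulVec y)) :
    ∑ j, |((W.map (fun a => (a:ℝ))).mulVec zs) j - ((W.map (fun a => (a:ℝ))).mulVec xs) j| ≤
      μ * ((m:ℝ) ^ 4 * (L / 4) *
        ((Finset.univ.sup (fun p : Fin m × Fin n => (W p.1 p.2).natAbs) : ℕ) : ℝ) ^ 2) ^ θ := by
  set A := W.map (fun a => (a:ℝ))
  set B : ℝ := ((Finset.univ.sup (fun p : Fin m × Fin n => (W p.1 p.2).natAbs) : ℕ) : ℝ)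
  have hnfrac : ((Finset.univ.filter fun i => xs i ≠ 0 ∧ xs i ≠ 1).card : ℝ) ≤ m := by
    rw [Set.ncard_eq_toFinset_card', Set.toFinset_ofPred] at hfrac
    exact_mod_cast hfrac
  have hround := apply_mulVec_round_sub_le hL.le (hP ▸ hconv) hdiff hLip
    W.abs_intCast_apply_le_sup_natAbs hxs hmin
  have hgap : g (A *ᵥ zs) - g (A *ᵥ xs) ≤ (m:ℝ) ^ 4 * (L / 4) * B ^ 2 := by
    have hzr := hzmin (fun i => (round (xs i) : ℝ)) fun i => by
      rcases round_eq_zero_or_one_of_mem_Icc (hxs i) with h | h <;> simp [h]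
    have hB : 0 ≤ B := Nat.cast_nonneg _
    calc g (A *ᵥ zs) - g (A *ᵥ xs) ≤ L * (m * (m * (B * (1 / 2)))) ^ 2 := by
          rw [Fintype.card_fin] at hround
          refine (sub_le_sub_right hzr _).trans (hround.trans ?_)
          gcongr
      _ = (m:ℝ) ^ 4 * (L / 4) * B ^ 2 := by ring
  have hzs_box : ∀ i, zs i ∈ Icc 0 1 := fun i => by rcases hzs i with h | h <;> simp [h]
  calc _ ≤ μ * (g (A *ᵥ zs) - g (A *ᵥ xs)) ^ θ := hsharp _ (hP ▸ ⟨zs, hzs_box, rfl⟩)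
    _ ≤ _ := by
      gcongr
      · exact sub_nonneg.2 (hmin zs hzs_box)
      · exact hθ.1
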